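/- Antichain bound along pure increasing sequences: suppose κ ∈ K, (2^{<θ_κ})⁺ ≤ κ, (s_i : i < i*) is ≤^{pr}_κ-increasing in Q, for each i < i* we have s_i ≤^{apr}_κ t_i, and the t_i are pairwise incompatible in Q. Then i* < (2^{<θ_κ})⁺. -/

import Mathlib

open Cardinal Set

noncomputable section

attribute [local instance] Classical.propDecidable

/-- A forcing condition: a partial `{0,1}`-valued function on ordinals,
coded as an `Option Bool`-valued function. -/
abbrev Cond : Type 1 := Ordinal → Option Bool

/-- The domain of a condition. -/
def cdom (q : Cond) : Set Ordinal := {i | (q i).isSome}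

/-- The `E_κ`-equivalence class of `i` : `j E_κ i` iff `j + κ = i + κ` (ordinal addition). -/
def Ecl (κ : Cardinal) (i : Ordinal) : Set Ordinal := {j | j + κ.ord = i + κ.ord}

/-- The `E_{<κ}`-class of `i`, where `E_{<κ} = id ∪ ⋃ {E_θ : θ ∈ K ∩ κ}`. -/
def EclLt (K : Set Cardinal) (κ : Cardinal) (i : Ordinal) : Set Ordinal :=
  {i} ∪ ⋃ θ ∈ K ∩ Set.Iio κ, Ecl θ i

/-- `θ_κ` : the least regular cardinal `≥ sup((K ∩ κ) ∪ {λ})`. -/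
def theta (lam : Cardinal) (K : Set Cardinal) (κ : Cardinal) : Cardinal :=
  sInf {θ : Cardinal | θ.IsRegular ∧ sSup ((K ∩ Set.Iio κ) ∪ {lam}) ≤ θ}

/-- `A` grows from `X` to `Y` : `∅ ≠ A ∩ X ≠ A ∩ Y`. -/
def grows (A X Y : Set Ordinal) : Prop := (A ∩ X).Nonempty ∧ A ∩ X ≠ A ∩ Y

/-- Membership in the forcing `Q = Q_K`. -/
def inQ (lam mu : Cardinal) (K : Set Cardinal) (q : Cond) : Prop :=
  cdom q ⊆ Set.Iio mu.ord ∧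
    ∀ i < mu.ord, ∀ κ ∈ K, #↥(Ecl κ i ∩ cdom q) < Cardinal.lift.{1} (theta lam K κ)

/-- The set of `E_κ`-classes which grow from `X` to `Y`. -/
def growClasses (mu : Cardinal) (κ : Cardinal) (X Y : Set Ordinal) : Set (Set Ordinal) :=
  {A | (∃ i < mu.ord, A = Ecl κ i) ∧ grows A X Y}

/-- The forcing order: `p ⊆ q` and for each `κ ∈ K`, fewer than `θ_κ` many
`E_κ`-classes grow from `dom p` to `dom q`. -/
def condLe (lam mu : Cardinal) (K : Set Cardinal) (p q : Cond) : Prop :=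
  (∀ i b, p i = some b → q i = some b) ∧
    ∀ κ ∈ K, #↥(growClasses mu κ (cdom p) (cdom q)) < Cardinal.lift.{1} (theta lam K κ)

/-- Pure extension at `κ`: no `E_κ`-class represented in `dom p` grows. -/
def condLePr (lam mu : Cardinal) (K : Set Cardinal) (κ : Cardinal) (p q : Cond) : Prop :=
  condLe lam mu K p q ∧ ∀ i : Ordinal, ¬ grows (Ecl κ i) (cdom p) (cdom q)

/-- Apure extension at `κ`: no new `E_κ`-classes are represented in `dom q`. -/
def condLeApr (lam mu : Cardinal) (K : Set Cardinal) (κ : Cardinal) (p q : Cond) : Prop :=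
  condLe lam mu K p q ∧ ∀ i ∈ cdom q, (Ecl κ i ∩ cdom p).Nonempty

/-- Union of two conditions (as partial functions, left priority). -/
def unionC (p q : Cond) : Cond := fun i => (p i).orElse (fun _ => q i)

/-- Restriction of a condition to a set of ordinals. -/
def restrictC (q : Cond) (X : Set Ordinal) : Cond := fun ξ => if ξ ∈ X then q ξ else none

/-- Union of a family of conditions indexed by ordinals below `θo`. -/
def unionFam (f : Ordinal → Cond) (θo : Ordinal) : Cond :=
  fun ξ => if h : ∃ i, i < θo ∧ (f i ξ).isSome then f h.choose ξ else none

/-- Compatibility in `Q`: existence of a common upper bound in `Q`. -/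
def compatQ (lam mu : Cardinal) (K : Set Cardinal) (q₁ q₂ : Cond) : Prop :=
  ∃ r : Cond, inQ lam mu K r ∧ condLe lam mu K q₁ r ∧ condLe lam mu K q₂ r

/-- Standing ground-model hypotheses: `λ = λ^{<λ}` regular, `μ = μ^λ` regular,
`K ⊆ [λ, μ]` a set of regular cardinals with `λ, μ ∈ K`. -/
def GroundCtx (lam mu : Cardinal) (K : Set Cardinal) : Prop :=
  lam.IsRegular ∧ lam ^< lam = lam ∧ mu.IsRegular ∧ mu ^ lam = mu ∧
    (∀ κ ∈ K, κ.IsRegular ∧ lam ≤ κ ∧ κ ≤ mu) ∧ lam ∈ K ∧ mu ∈ K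

/-!
Write `θ = θ_κ` and `χ = 2^{<θ}`; regularity of `θ` gives `χ^ν = χ` for `ν < θ`. If `i* ≥ χ⁺`,
look at the sets `D_i = dom t_i \ dom s_i`, each of size `< θ`, and at the `E_{<κ}`-classes
(of size `≤ θ`) that they meet. A Δ-system argument on these families of classes, followed by
pigeonholing the traces of the `D_i` on the union of the root classes and the values of `t_i`
there, yields `i < j` such that `D_i` and `D_j` meet every common `E_{<κ}`-class in the same
points, where `t_i` and `t_j` agree. Then `t_i ∪ t_j` is a common extension: a class growing
from `dom t_i` (resp. `dom t_j`) to the union already grew from `dom s_j` to `dom t_j` or from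
`dom s_i` to `dom s_j` (resp. from `dom s_i` to `dom t_i`), by purity of `s_i ≤ s_j` and
apurity of `s_i ≤ t_i`, `s_j ≤ t_j`. This contradicts the incompatibility of the `t_i`.
-/

open Order

namespace Cardinal

theorem power_le_self_of_lt_cof {x ν : Cardinal.{u}} (hx : ℵ₀ ≤ x) (hν : ν < x.ord.cof)
    (h : ∀ y < x, y ^ ν ≤ x) : x ^ ν ≤ x := by
  have hbdd : ∀ f : ν.out → x.ord.ToType, ∃ a, ∀ i, f i < a := by
    intro f
    by_contra! hf
    have hcof : Order.cof x.ord.ToType ≤ #(range f) :=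
      Order.cof_le fun a => (hf a).elim fun i hi => ⟨f i, mem_range_self i, hi⟩
    rw [Ordinal.cof_toType] at hcof
    exact (hcof.trans (mk_range_le.trans (mk_out ν).le)).not_gt hν
  choose a ha using hbdd
  calc x ^ ν = #(ν.out → x.ord.ToType) := by rw [← power_def, mk_out, mk_toType, card_ord]
    _ ≤ #(Σ b : x.ord.ToType, ν.out → Iio b) :=
        mk_le_of_surjective (f := fun p i => (p.2 i).1) fun f =>
          ⟨⟨a f, fun i => ⟨f i, ha f i⟩⟩, rfl⟩
    _ = sum fun b : x.ord.ToType => #(Iio b) ^ ν := by simp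
    _ ≤ sum fun _ : x.ord.ToType => x :=
        sum_le_sum _ _ fun b => h _ (by simpa using mk_Iio_lt b (by simp))
    _ = x := by rw [sum_const, mk_toType, card_ord, lift_id, mul_eq_self hx]

theorem le_two_powerlt {θ : Cardinal.{u}} : θ ≤ 2 ^< θ :=
  le_of_forall_lt fun c hc => (cantor c).trans_le (le_powerlt 2 hc)

theorem lt_cof_ord_two_powerlt {θ ν : Cardinal.{u}} (hθ : θ.IsRegular) (hν : ν < θ)
    (hlt : ∀ c < θ, 2 ^ c < 2 ^< θ) (hcov : ∀ y < 2 ^< θ, ∃ c < θ, y ≤ 2 ^ c) :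
    ν < (2 ^< θ).ord.cof := by
  set χ := 2 ^< θ
  have hχ : ℵ₀ ≤ χ := hθ.1.trans le_two_powerlt
  by_contra! hcof
  obtain ⟨S, hS, hSc⟩ := Order.exists_cof_eq χ.ord.ToType
  rw [Ordinal.cof_toType] at hSc
  have hIic : ∀ s : S, ∃ c < θ, #(Iic s.1) ≤ 2 ^ c := fun s => hcov _ <| by
    rw [← Iio_insert]
    refine mk_insert_le.trans_lt (add_lt_of_lt hχ ?_ (one_lt_aleph0.trans_le hχ))
    simpa using mk_Iio_lt s.1 (by simp)
  choose c hcθ hc using hIic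
  have hsup : (⨆ s, c s) < θ :=
    iSup_lt_of_lt_cof_ord (hSc.trans_lt (hcof.trans_lt (hν.trans_eq hθ.cof_ord.symm))) hcθ
  have hcover : (Set.univ : Set χ.ord.ToType) ⊆ ⋃ s : S, Iic s.1 := fun a _ =>
    (hS a).elim fun s hs => mem_iUnion.mpr ⟨⟨s, hs.1⟩, hs.2⟩
  have : χ ≤ 2 ^ (ν + ⨆ s, c s) := calc
    χ = #(Set.univ : Set χ.ord.ToType) := by rw [mk_univ, mk_toType, card_ord]
    _ ≤ #S * ⨆ s : S, #(Iic s.1) := (mk_le_mk_of_subset hcover).trans (mk_iUnion_le _)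
    _ ≤ 2 ^ ν * 2 ^ ⨆ s, c s := by
        gcongr
        · exact hSc.le.trans (hcof.trans (cantor ν).le)
        · exact ciSup_le' fun s => (hc s).trans
            (power_le_power_left two_ne_zero (le_ciSup bddAbove_of_small s))
    _ = 2 ^ (ν + ⨆ s, c s) := (power_add _ _ _).symm
  exact this.not_gt (hlt _ (add_lt_of_lt hθ.1 hν hsup))

theorem two_powerlt_power_le {θ ν : Cardinal.{u}} (hθ : θ.IsRegular) (hν : ν < θ) :
    (2 ^< θ) ^ ν ≤ 2 ^< θ := by
  have hpow : ∀ c < θ, (2 ^ c) ^ ν ≤ 2 ^< θ := fun c hc => by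
    rw [← power_mul]
    exact le_powerlt 2 (mul_lt_of_lt hθ.1 hc hν)
  by_cases hconst : ∃ c < θ, 2 ^< θ ≤ 2 ^ c
  · obtain ⟨c, hc, hle⟩ := hconst
    exact (power_le_power_right hle).trans (hpow c hc)
  push Not at hconst
  have hcov : ∀ y < 2 ^< θ, ∃ c < θ, y ≤ 2 ^ c := fun y hy => by
    by_contra! h
    exact hy.not_ge (powerlt_le.mpr fun c hc => (h c hc).le)
  refine power_le_self_of_lt_cof (hθ.1.trans le_two_powerlt)
    (lt_cof_ord_two_powerlt hθ hν hconst hcov) fun y hy => ?_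
  obtain ⟨c, hc, hyc⟩ := hcov y hy
  exact (power_le_power_right hyc).trans (hpow c hc)

theorem lift_power_le_of_power_le {θ χ : Cardinal.{u}} (hpow : ∀ ν < θ, χ ^ ν ≤ χ) :
    ∀ ν < lift.{v} θ, lift.{v} χ ^ ν ≤ lift.{v} χ := fun ν hν => by
  obtain ⟨ν, hνθ, rfl⟩ := lt_lift_iff.mp hν
  rw [← lift_power, lift_le]
  exact hpow ν hνθ

theorem mk_subset_mk_lt_le {α : Type u} {U : Set α} {θ χ : Cardinal.{u}} (hθχ : θ ≤ χ)
    (hχ : ℵ₀ ≤ χ) (hpow : ∀ ν < θ, χ ^ ν ≤ χ) (hU : #U ≤ χ) :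
    #{T : Set α | T ⊆ U ∧ #T < θ} ≤ χ := by
  have hsub : {T : Set α | T ⊆ U ∧ #T < θ} ⊆
      ⋃ o ∈ Iio θ.ord, {T | T ⊆ U ∧ #T ≤ o.card} := fun T hT =>
    mem_iUnion₂.mpr ⟨(#T).ord, ord_lt_ord.mpr hT.2, hT.1, by simp⟩
  have hA : ∀ o ∈ Iio θ.ord, #{T | T ⊆ U ∧ #T ≤ o.card} ≤ χ := fun o ho =>
    (mk_bounded_subset_le U o.card).trans <|
      (power_le_power_right (max_le hU hχ)).trans (hpow _ (lt_ord.mp ho))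
  rw [← lift_le.{u + 1}]
  calc lift.{u + 1} #{T : Set α | T ⊆ U ∧ #T < θ}
      ≤ lift.{u + 1} #(⋃ o ∈ Iio θ.ord, {T | T ⊆ U ∧ #T ≤ o.card}) :=
        lift_le.mpr (mk_le_mk_of_subset hsub)
    _ ≤ lift.{u} #(Iio θ.ord) * ⨆ o : Iio θ.ord, lift.{u + 1} #{T | T ⊆ U ∧ #T ≤ o.1.card} :=
        mk_biUnion_le_lift _ _
    _ ≤ lift.{u + 1} χ * lift.{u + 1} χ := by
        gcongr
        · simpa [mk_Iio_ordinal] using hθχ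
        · exact ciSup_le' fun o => lift_le.mpr (hA o.1 o.2)
    _ = lift.{u + 1} χ := by rw [← lift_mul, mul_eq_self hχ]

theorem mk_preimage_image_le {α β : Type u} (f : α → β) {s : Set α} {c : Cardinal.{u}}
    (hc : ℵ₀ ≤ c) (hs : #s ≤ c) (hf : ∀ x, #{y | f y = f x} ≤ c) : #(f ⁻¹' (f '' s)) ≤ c := by
  have hunion : f ⁻¹' (f '' s) = ⋃ x ∈ s, {y | f y = f x} := by
    ext y
    simp [eq_comm]
  calc #(f ⁻¹' (f '' s)) = #(⋃ x ∈ s, {y | f y = f x}) := by rw [hunion]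
    _ ≤ #s * ⨆ x : s, #{y | f y = f x.1} := mk_biUnion_le _ _
    _ ≤ c * c := mul_le_mul' hs (ciSup_le' fun x => hf x.1)
    _ = c := mul_eq_self hc

theorem mk_biUnion_Iic_le {β : Type (u + 1)} {χ : Cardinal.{u}} (hχ : ℵ₀ ≤ χ) {β₀ : Ordinal.{u}}
    (hβ₀ : β₀ < (succ χ).ord) {G : Ordinal.{u} → Set β} (hG : ∀ γ ≤ β₀, #(G γ) ≤ lift.{u + 1} χ) :
    #(⋃ γ ∈ Iic β₀, G γ) ≤ lift.{u + 1} χ := by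
  refine (mk_biUnion_le _ _).trans ?_
  rw [← mul_eq_self (aleph0_le_lift.mpr hχ)]
  gcongr
  · rw [← Iio_succ, mk_Iio_ordinal, lift_le, ← lt_succ_iff, ← lt_ord]
    exact (isSuccLimit_ord (isRegular_succ hχ).1).succ_lt hβ₀
  · exact ciSup_le' fun γ => hG γ γ.2

theorem nontrivial_of_lt_mk {α : Type u} {s : Set α} {c : Cardinal.{u}} (hc : ℵ₀ ≤ c)
    (h : c < #s) : s.Nontrivial := by
  rw [← Set.nontrivial_coe_sort, ← one_lt_iff_nontrivial]
  exact (one_lt_aleph0.trans_le hc).trans h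

theorem exists_subset_lt_mk_forall_eq {β V : Type u} {S : Set β} {W : Set V} {c : Cardinal.{u}}
    (hc : ℵ₀ ≤ c) (hS : c < #S) {F : β → V} (hF : MapsTo F S W) (hW : #W ≤ c) :
    ∃ T ⊆ S, c < #T ∧ ∃ v ∈ W, ∀ a ∈ T, F a = v := by
  obtain ⟨v, T, hTS, hT, hv⟩ := infinite_pigeonhole_set (fun a : S => (⟨F a, hF a.2⟩ : W))
    (succ c) (succ_le_of_lt hS) (hc.trans (le_succ c))
    (by rw [(isRegular_succ hc).cof_ord]; exact hW.trans_lt (lt_succ c))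
  exact ⟨T, hTS, succ_le_iff.mp hT, v, v.2, fun a ha => congrArg Subtype.val (hv ha)⟩

end Cardinal

namespace Ordinal

theorem exists_lt_ord_le_cof_forall_lt {θ N : Cardinal.{u}} (hθ : θ.IsRegular)
    (hN : N.IsRegular) (hθN : θ < N) {H : Ordinal.{u} → Ordinal.{u}} (hH : Monotone H)
    (hHN : ∀ β < N.ord, H β < N.ord) :
    ∃ δ < N.ord, θ ≤ δ.cof ∧ ∀ β < δ, H β < δ := by
  -- `δ = deriv g θ` has cofinality `θ`, and each step `nfp g _` of its construction is closed
  -- under `H` because `H` is monotone.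
  set g := fun γ => succ (H γ)
  have hθlim := Cardinal.isSuccLimit_ord hθ.1
  refine ⟨deriv g θ.ord, Cardinal.deriv_lt_ord hN (hθ.1.trans_lt hθN).ne'
    (fun γ hγ => (Cardinal.isSuccLimit_ord hN.1).succ_lt (hHN γ hγ))
    (Cardinal.ord_lt_ord.mpr hθN), ?_, fun β hβ => ?_⟩
  · rw [cof_map_of_isNormal (isNormal_deriv g) hθlim, hθ.cof_ord]
  obtain ⟨a, ha, hβa⟩ := ((isNormal_deriv g).lt_iff_exists_lt hθlim).mp hβ
  obtain ⟨n, hn⟩ := lt_nfp_iff.mp (hβa.trans ((lt_succ _).trans_le (le_nfp g _)))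
  calc H β ≤ H (g^[n] (succ (deriv g a))) := hH hn.le
    _ < g^[n + 1] (succ (deriv g a)) := by
        rw [Function.iterate_succ_apply']
        exact lt_succ _
    _ ≤ deriv g (succ a) := (iterate_le_nfp _ _ _).trans_eq (deriv_succ g a).symm
    _ < deriv g θ.ord := (isNormal_deriv g).strictMono (hθlim.succ_lt ha)

/-- A weak form of Fodor's pressing-down lemma. -/
theorem exists_lift_le_mk_of_regressive {θ N : Cardinal.{u}} (hθ : θ.IsRegular)
    (hN : N.IsRegular) (hθN : θ < N) (f : Ordinal.{u} → Ordinal.{u})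
    (hf : ∀ δ < N.ord, θ ≤ δ.cof → f δ < δ) :
    ∃ β < N.ord, Cardinal.lift.{u + 1} N ≤ #{α | α < N.ord ∧ f α ≤ β} := by
  by_contra! hsmall
  set S := fun β => {α | α < N.ord ∧ f α ≤ β}
  have hbdd : ∀ β, BddAbove ((· + 1) '' S β) := fun β =>
    ⟨N.ord, by
      rintro _ ⟨α, hα, rfl⟩
      exact ((Cardinal.isSuccLimit_ord hN.1).succ_lt hα.1).le⟩
  obtain ⟨δ, hδ, hcof, hclosed⟩ := exists_lt_ord_le_cof_forall_lt hθ hN hθN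
    (H := fun β => sSup ((· + 1) '' S β))
    (fun β β' hle => csSup_le_csSup' (hbdd β') (image_mono fun α hα => ⟨hα.1, hα.2.trans hle⟩))
    (fun β hβ => sSup_add_one_lt_of_lt_cof
      (by rw [← lift_cof, hN.cof_ord]; exact hsmall β hβ) fun α hα => hα.1)
  exact (lt_add_one δ).not_ge <|
    (le_csSup (hbdd (f δ)) ⟨δ, ⟨hδ, le_rfl⟩, rfl⟩).trans (hclosed _ (hf δ hδ hcof)).le

end Ordinal

/-- The proof: `fb α` bounds the first occurrences of the points of `G α` that already occur in
an earlier `G γ`. For `α` of cofinality `≥ θ` we have `fb α < α`, so pressing down bounds `fb` by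
one `β₀` on `χ⁺` many `α`; pigeonholing their traces on `⋃_{γ ≤ β₀} G γ`, of which there are at
most `χ^{<θ} = χ`, gives the root. -/
theorem exists_deltaSystem {β : Type (u + 1)} {θ χ : Cardinal.{u}} (hθ : θ.IsRegular)
    (hθχ : θ ≤ χ) (hpow : ∀ ν < θ, χ ^ ν ≤ χ) (G : Ordinal.{u} → Set β)
    (hG : ∀ α < (succ χ).ord, #(G α) < lift.{u + 1} θ) :
    ∃ T ⊆ Iio (succ χ).ord, lift.{u + 1} χ < #T ∧
      ∃ R, ∀ a ∈ T, ∀ b ∈ T, a ≠ b → G a ∩ G b = R := by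
  have hχ : ℵ₀ ≤ χ := hθ.1.trans hθχ
  have hχ' : ℵ₀ ≤ lift.{u + 1} χ := aleph0_le_lift.mpr hχ
  have hθχ' : lift.{u + 1} θ ≤ lift.{u + 1} χ := lift_le.mpr hθχ
  set birth : β → Ordinal.{u} := fun x => sInf {γ | x ∈ G γ}
  have mem_birth : ∀ {x γ}, x ∈ G γ → x ∈ G (birth x) ∧ birth x ≤ γ := fun hx =>
    ⟨csInf_mem (s := {γ | _ ∈ G γ}) ⟨_, hx⟩, csInf_le' hx⟩
  set fb : Ordinal.{u} → Ordinal.{u} := fun α => sSup (birth '' {x ∈ G α | birth x < α})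
  have le_fb : ∀ {α x}, x ∈ G α → birth x < α → birth x ≤ fb α := fun {α} _ hx hxα =>
    le_csSup ⟨α, by rintro _ ⟨y, hy, rfl⟩; exact hy.2.le⟩ ⟨_, ⟨hx, hxα⟩, rfl⟩
  have hfb : ∀ δ < (succ χ).ord, θ ≤ δ.cof → fb δ < δ := fun δ hδ hcof =>
    Ordinal.sSup_lt_of_lt_cof
      (by
        rw [← Ordinal.lift_cof]
        exact mk_image_le.trans_lt <| (mk_le_mk_of_subset fun x hx => hx.1).trans_lt
          ((hG δ hδ).trans_le (lift_le.mpr hcof)))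
      (by rintro _ ⟨x, hx, rfl⟩; exact hx.2)
  obtain ⟨β₀, hβ₀, hS⟩ := Ordinal.exists_lift_le_mk_of_regressive hθ (isRegular_succ hχ)
    (hθχ.trans_lt (lt_succ χ)) fb hfb
  set U := ⋃ γ ∈ Iic β₀, G γ
  obtain ⟨T, hTS, hT, v, -, hv⟩ := exists_subset_lt_mk_forall_eq hχ'
    (succ_le_iff.mp (by rwa [← lift_succ])) (F := fun α => G α ∩ U)
    (W := {V | V ⊆ U ∧ #V < lift.{u + 1} θ})
    (fun α (hα : α < _ ∧ _) =>
      ⟨inter_subset_right, (mk_le_mk_of_subset inter_subset_left).trans_lt (hG α hα.1)⟩)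
    (mk_subset_mk_lt_le hθχ' hχ' (lift_power_le_of_power_le hpow)
      (mk_biUnion_Iic_le hχ hβ₀ fun γ hγ => ((hG γ (hγ.trans_lt hβ₀)).trans_le hθχ').le))
  have hroot : ∀ {a b}, a ∈ T → b ∈ T → a < b → G a ∩ G b = v := fun {a b} ha hb hab => by
    have hsub : G a ∩ G b ⊆ U := fun x hx =>
      mem_iUnion₂.mpr ⟨birth x, (le_fb hx.2 ((mem_birth hx.1).2.trans_lt hab)).trans (hTS hb).2,
        (mem_birth hx.1).1⟩
    calc G a ∩ G b = (G a ∩ U) ∩ (G b ∩ U) := by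
          rw [← inter_inter_distrib_right, inter_eq_left.mpr hsub]
      _ = v := by rw [hv a ha, hv b hb, inter_self]
  refine ⟨T, fun α hα => (hTS hα).1, hT, v, fun a ha b hb hab => ?_⟩
  rcases hab.lt_or_gt with hab | hab
  · exact hroot ha hb hab
  · rw [inter_comm]
    exact hroot hb ha hab

def AgreeOnBlocks {α β γ : Type*} (rep : α → β) (D₁ D₂ : Set α) (f₁ f₂ : α → γ) : Prop :=
  ∀ x ∈ D₁, ∀ y ∈ D₂, rep x = rep y → x ∈ D₂ ∧ y ∈ D₁ ∧ f₁ x = f₂ x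

theorem exists_lt_agreeOnBlocks {β : Type (u + 1)} {γ : Type u} {θ χ : Cardinal.{u}}
    (hθ : θ.IsRegular) (hθχ : θ ≤ χ) (hpow : ∀ ν < θ, χ ^ ν ≤ χ) (hγ : #γ ≤ χ)
    (rep : Ordinal.{u} → β) (hrep : ∀ x, #{y | rep y = rep x} ≤ lift.{u + 1} χ)
    (D : Ordinal.{u} → Set Ordinal.{u}) (hD : ∀ α < (succ χ).ord, #(D α) < lift.{u + 1} θ)
    (f : Ordinal.{u} → Ordinal.{u} → γ) :
    ∃ i j, i < j ∧ j < (succ χ).ord ∧ AgreeOnBlocks rep (D i) (D j) (f i) (f j) := by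
  have hχ' : ℵ₀ ≤ lift.{u + 1} χ := aleph0_le_lift.mpr (hθ.1.trans hθχ)
  have hθχ' : lift.{u + 1} θ ≤ lift.{u + 1} χ := lift_le.mpr hθχ
  have hpow' := lift_power_le_of_power_le.{u, u + 1} hpow
  obtain ⟨T₁, hT₁, hT₁χ, R, hR⟩ := exists_deltaSystem hθ hθχ hpow (fun α => rep '' D α)
    fun α hα => mk_image_le.trans_lt (hD α hα)
  obtain ⟨a, ha, b, hb, hab⟩ := nontrivial_of_lt_mk hχ' hT₁χ
  set B := rep ⁻¹' R
  have hB : #B ≤ lift.{u + 1} χ :=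
    (mk_le_mk_of_subset (preimage_mono (hR a ha b hb hab ▸ inter_subset_left))).trans
      (mk_preimage_image_le rep hχ' ((hD a (hT₁ ha)).le.trans hθχ') hrep)
  obtain ⟨T₂, hT₂, hT₂χ, V, hV, hDV⟩ := exists_subset_lt_mk_forall_eq hχ' hT₁χ
    (F := fun α => D α ∩ B) (W := {V | V ⊆ B ∧ #V < lift.{u + 1} θ})
    (fun α hα => ⟨inter_subset_right,
      (mk_le_mk_of_subset inter_subset_left).trans_lt (hD α (hT₁ hα))⟩)
    (mk_subset_mk_lt_le hθχ' hχ' hpow' hB)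
  obtain ⟨T₃, hT₃, hT₃χ, φ, -, hfV⟩ := exists_subset_lt_mk_forall_eq hχ' hT₂χ
    (F := fun α (x : V) => f α x) (mapsTo_univ _ _) (by
      rw [mk_univ, mk_arrow, lift_id'.{u, u + 1}]
      exact (power_le_power_right (lift_le.mpr hγ)).trans (hpow' _ hV.2))
  have hagree : ∀ i ∈ T₃, ∀ j ∈ T₃, i ≠ j → AgreeOnBlocks rep (D i) (D j) (f i) (f j) := by
    intro i hi j hj hij x hx y hy hxy
    have hxB : x ∈ B := by
      rw [mem_preimage, ← hR i (hT₂ (hT₃ hi)) j (hT₂ (hT₃ hj)) hij]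
      exact ⟨⟨x, hx, rfl⟩, ⟨y, hy, hxy.symm⟩⟩
    have hyB : y ∈ B := by rwa [mem_preimage, ← hxy]
    have hDi := hDV i (hT₃ hi)
    have hDj := hDV j (hT₃ hj)
    have hxV : x ∈ V := hDi ▸ ⟨hx, hxB⟩
    have hyV : y ∈ V := hDj ▸ ⟨hy, hyB⟩
    exact ⟨(hDj.symm.subset hxV).1, (hDi.symm.subset hyV).1,
      congrFun ((hfV i hi).trans (hfV j hj).symm) ⟨x, hxV⟩⟩
  obtain ⟨i, hi, j, hj, hij⟩ := nontrivial_of_lt_mk hχ' hT₃χ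
  rcases hij.lt_or_gt with hij | hji
  · exact ⟨i, j, hij, hT₁ (hT₂ (hT₃ hj)), hagree i hi j hj hij.ne⟩
  · exact ⟨j, i, hji, hT₁ (hT₂ (hT₃ hi)), hagree j hj i hi hji.ne⟩

theorem theta_mem (lam : Cardinal) (K : Set Cardinal) (κ : Cardinal) :
    theta lam K κ ∈ {θ : Cardinal | θ.IsRegular ∧ sSup ((K ∩ Iio κ) ∪ {lam}) ≤ θ} :=
  csInf_mem ⟨_, isRegular_succ (le_max_right (sSup ((K ∩ Iio κ) ∪ {lam})) ℵ₀),
    (le_max_left _ _).trans (le_succ _)⟩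

theorem isRegular_theta (lam : Cardinal) (K : Set Cardinal) (κ : Cardinal) :
    (theta lam K κ).IsRegular :=
  (theta_mem lam K κ).1

theorem le_theta {lam : Cardinal} {K : Set Cardinal} {κ c : Cardinal} (hc : c ∈ K ∩ Iio κ) :
    c ≤ theta lam K κ := by
  refine (le_csSup ⟨max κ lam, ?_⟩ (Or.inl hc)).trans (theta_mem lam K κ).2
  rintro d (hd | rfl)
  · exact hd.2.le.trans (le_max_left _ _)
  · exact le_max_right _ _

theorem mem_Ecl_self (κ : Cardinal) (i : Ordinal) : i ∈ Ecl κ i := rfl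

theorem Ecl_eq_of_mem {κ : Cardinal} {i j : Ordinal} (h : j ∈ Ecl κ i) : Ecl κ j = Ecl κ i := by
  ext k
  exact Eq.congr_right h

theorem mem_Ecl_comm {κ : Cardinal} {i j : Ordinal} : j ∈ Ecl κ i ↔ i ∈ Ecl κ j :=
  eq_comm

theorem Ecl_subset_Ecl {c₁ c₂ : Cardinal} (hc₂ : ℵ₀ ≤ c₂) (h : c₁ ≤ c₂) (i : Ordinal) :
    Ecl c₁ i ⊆ Ecl c₂ i := by
  rcases h.lt_or_eq with h | rfl
  · intro j (hj : j + c₁.ord = i + c₁.ord)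
    have habs : c₁.ord + c₂.ord = c₂.ord :=
      (Ordinal.isPrincipal_add_ord hc₂).add_eq_right (ord_lt_ord.mpr h)
    show j + c₂.ord = i + c₂.ord
    rw [← habs, ← add_assoc, hj, add_assoc]
  · exact subset_rfl

theorem mk_Ecl_le {c : Cardinal.{0}} (hc : c ≠ 0) (i : Ordinal) :
    #(Ecl c i) ≤ lift.{1} c := by
  have hc' : 0 < c.ord := ord_pos.mpr (pos_iff_ne_zero.mpr hc)
  set m := sInf (Ecl c i)
  have hm : m + c.ord = i + c.ord := csInf_mem (s := Ecl c i) ⟨i, mem_Ecl_self c i⟩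
  have hsub : Ecl c i ⊆ (m + ·) '' Iio c.ord := fun j (hj : j + c.ord = i + c.ord) => by
    have hmj : m ≤ j := csInf_le' hj
    refine ⟨j - m, Ordinal.sub_lt_of_lt_add ?_ hc',
      Ordinal.add_sub_cancel_of_le hmj⟩
    by_contra! hle
    have : m + (c.ord + c.ord) ≤ m + c.ord := calc
      m + (c.ord + c.ord) = m + c.ord + c.ord := (add_assoc _ _ _).symm
      _ ≤ j + c.ord := add_le_add_left hle _
      _ = m + c.ord := hj.trans hm.symm
    exact (lt_add_of_pos_right _ hc').not_ge ((add_le_add_iff_left m).mp this)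
  calc #(Ecl c i) ≤ #(Iio c.ord) := (mk_le_mk_of_subset hsub).trans mk_image_le
    _ = lift.{1} c := by rw [mk_Iio_ordinal, card_ord]

theorem EclLt_subset_Ecl {K : Set Cardinal} {κ θ : Cardinal} (hθ : ℵ₀ ≤ θ)
    (hKθ : ∀ c ∈ K ∩ Iio κ, c ≤ θ) (i : Ordinal) : EclLt K κ i ⊆ Ecl θ i := by
  rintro j (rfl | hj)
  · exact mem_Ecl_self θ j
  · obtain ⟨c, hc, hj⟩ := mem_iUnion₂.mp hj
    exact Ecl_subset_Ecl hθ (hKθ c hc) i hj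

theorem mk_EclLt_le (lam : Cardinal.{0}) (K : Set Cardinal.{0}) (κ : Cardinal) (x : Ordinal) :
    #(EclLt K κ x) ≤ lift.{1} (theta lam K κ) :=
  have hθ := (isRegular_theta lam K κ).1
  (mk_le_mk_of_subset (EclLt_subset_Ecl hθ (fun _ hc => le_theta hc) x)).trans
    (mk_Ecl_le (aleph0_pos.trans_le hθ).ne' x)

theorem EclLt_subset_of_mem_Ecl {K : Set Cardinal} {κ c : Cardinal} (hK : ∀ c ∈ K, ℵ₀ ≤ c)
    (hc : c ∈ K ∩ Iio κ) {x y : Ordinal} (h : y ∈ Ecl c x) : EclLt K κ y ⊆ EclLt K κ x := by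
  rintro z (rfl | hz)
  · exact Or.inr (mem_iUnion₂.mpr ⟨c, hc, h⟩)
  obtain ⟨d, hd, hz⟩ := mem_iUnion₂.mp hz
  refine Or.inr (mem_iUnion₂.mpr ?_)
  rcases le_total c d with hcd | hdc
  · exact ⟨d, hd, Ecl_eq_of_mem (Ecl_subset_Ecl (hK d hd.1) hcd x h) ▸ hz⟩
  · exact ⟨c, hc, Ecl_eq_of_mem h ▸ Ecl_subset_Ecl (hK c hc.1) hdc y hz⟩

theorem EclLt_eq_of_mem_Ecl {K : Set Cardinal} {κ c : Cardinal} (hK : ∀ c ∈ K, ℵ₀ ≤ c)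
    (hc : c ∈ K ∩ Iio κ) {x y : Ordinal} (h : y ∈ Ecl c x) : EclLt K κ y = EclLt K κ x :=
  (EclLt_subset_of_mem_Ecl hK hc h).antisymm (EclLt_subset_of_mem_Ecl hK hc (mem_Ecl_comm.mp h))

theorem cdom_subset_of_extends {p q : Cond} (h : ∀ i b, p i = some b → q i = some b) :
    cdom p ⊆ cdom q := fun i hi => by
  obtain ⟨b, hb⟩ := Option.isSome_iff_exists.mp hi
  simp [cdom, h i b hb]

theorem cdom_unionC (p q : Cond) : cdom (unionC p q) = cdom p ∪ cdom q := by
  ext i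
  simp only [cdom, unionC, mem_ofPred_eq, mem_union]
  cases p i <;> simp

theorem unionC_extends_left {p : Cond} (q : Cond) {i : Ordinal} {b : Bool} (h : p i = some b) :
    unionC p q i = some b := by
  simp [unionC, h]

theorem unionC_extends_right {p q : Cond} (hpq : ∀ i ∈ cdom p, i ∈ cdom q → p i = q i)
    {i : Ordinal} {b : Bool} (h : q i = some b) : unionC p q i = some b := by
  cases hp : p i with
  | none => simp [unionC, hp, h]
  | some b' =>
    have hq : i ∈ cdom q := by simp [cdom, h]
    rw [← h, ← hpq i (by simp [cdom, hp]) hq]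
    simp [unionC, hp]

theorem inQ_unionC {lam mu : Cardinal} {K : Set Cardinal} {p q : Cond} (hp : inQ lam mu K p)
    (hq : inQ lam mu K q) : inQ lam mu K (unionC p q) := by
  refine ⟨cdom_unionC p q ▸ union_subset hp.1 hq.1, fun i hi κ hκ => ?_⟩
  rw [cdom_unionC, inter_union_distrib_left]
  exact (mk_union_le _ _).trans_lt <|
    add_lt_of_lt (aleph0_le_lift.mpr (isRegular_theta lam K κ).1)
      (hp.2 i hi κ hκ) (hq.2 i hi κ hκ)

theorem mk_cdom_diff_lt {lam mu : Cardinal} {K : Set Cardinal} {κ : Cardinal} (hκ : κ ∈ K)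
    {s t : Cond} (ht : inQ lam mu K t) (hst : condLeApr lam mu K κ s t) :
    #↥(cdom t \ cdom s) < lift.{1} (theta lam K κ) := by
  have hθ := (isRegular_theta lam K κ).lift.{1}
  have hgc := hst.1.2 κ hκ
  have hsub : cdom t \ cdom s ⊆ ⋃ A ∈ growClasses mu κ (cdom s) (cdom t), A ∩ cdom t :=
    fun x hx => mem_iUnion₂.mpr ⟨Ecl κ x, ⟨⟨x, ht.1 hx.1, rfl⟩, hst.2 x hx.1, fun h =>
      hx.2 (h.symm.subset ⟨mem_Ecl_self κ x, hx.1⟩).2⟩, mem_Ecl_self κ x, hx.1⟩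
  refine (mk_le_mk_of_subset hsub).trans_lt <| (mk_biUnion_le _ _).trans_lt <|
    mul_lt_of_lt hθ.1 hgc <|
      iSup_lt_of_lt_cof_ord (hgc.trans_eq hθ.cof_ord.symm) ?_
  rintro ⟨_, ⟨a, ha, rfl⟩, -⟩
  exact ht.2 a ha κ hκ

theorem exists_mem_not_mem_of_inter_ne {α : Type*} {A X Y : Set α} (hXY : X ⊆ Y)
    (h : A ∩ X ≠ A ∩ Y) : ∃ x ∈ A, x ∈ Y ∧ x ∉ X := by
  by_contra! hno
  exact h ((inter_subset_inter_right A hXY).antisymm fun x hx => ⟨hx.1, hno x hx.1 hx.2⟩)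

theorem Ecl_inter_nonempty_of_le {κ c : Cardinal} (hc : ℵ₀ ≤ c) (hκc : κ ≤ c) {a ξ : Ordinal}
    (hξ : ξ ∈ Ecl c a) {X : Set Ordinal} (h : (Ecl κ ξ ∩ X).Nonempty) :
    (Ecl c a ∩ X).Nonempty :=
  h.mono (inter_subset_inter_left X (Ecl_eq_of_mem hξ ▸ Ecl_subset_Ecl hc hκc ξ))

theorem mem_of_not_grows {κ : Cardinal} {ξ w : Ordinal} {X₁ X₂ : Set Ordinal}
    (hpure : ¬ grows (Ecl κ ξ) X₁ X₂) (hne : (Ecl κ ξ ∩ X₁).Nonempty) (hw : w ∈ Ecl κ ξ)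
    (hwX : w ∈ X₂) : w ∈ X₁ :=
  ((not_not.mp (not_and.mp hpure hne)).symm.subset ⟨hw, hwX⟩).2

theorem mem_Ecl_of_mem_Ecl_of_le {κ c : Cardinal} (hκ : ℵ₀ ≤ κ) (hcκ : c ≤ κ) {a ξ w : Ordinal}
    (hξ : ξ ∈ Ecl c a) (hw : w ∈ Ecl c a) : w ∈ Ecl κ ξ :=
  Ecl_subset_Ecl hκ hcκ ξ (Ecl_eq_of_mem hξ ▸ hw)

section Amalgamation

variable {κ c : Cardinal} {a : Ordinal} {X₁ X₂ Y₁ Y₂ : Set Ordinal}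

theorem grows_of_grows_union_right (hκ : ℵ₀ ≤ κ) (hc : ℵ₀ ≤ c) (hX : X₁ ⊆ X₂) (hXY₂ : X₂ ⊆ Y₂)
    (hpure : ∀ ξ, ¬ grows (Ecl κ ξ) X₁ X₂) (hapr₁ : ∀ ξ ∈ Y₁, (Ecl κ ξ ∩ X₁).Nonempty)
    (hcross : c < κ → ∀ x ∈ Ecl c a ∩ (Y₁ \ X₁), ∀ y ∈ Ecl c a ∩ (Y₂ \ X₂), x ∈ Y₂ ∧ y ∈ Y₁)
    (h : grows (Ecl c a) Y₂ (Y₁ ∪ Y₂)) : grows (Ecl c a) X₁ Y₁ := by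
  obtain ⟨⟨w, hwA, hwY₂⟩, hne⟩ := h
  obtain ⟨x, hxA, hxY, hxY₂⟩ := exists_mem_not_mem_of_inter_ne subset_union_right hne
  have hxY₁ : x ∈ Y₁ := hxY.resolve_right hxY₂
  have hxX₁ : x ∉ X₁ := fun hx => hxY₂ (hXY₂ (hX hx))
  refine ⟨?_, fun heq => hxX₁ (heq.symm.subset ⟨hxA, hxY₁⟩).2⟩
  rcases lt_or_ge c κ with hcκ | hκc
  · by_cases hwX₂ : w ∈ X₂
    · exact ⟨w, hwA, mem_of_not_grows (hpure x) (hapr₁ x hxY₁)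
        (mem_Ecl_of_mem_Ecl_of_le hκ hcκ.le hxA hwA) hwX₂⟩
    · exact absurd (hcross hcκ x ⟨hxA, hxY₁, hxX₁⟩ w ⟨hwA, hwY₂, hwX₂⟩).1 hxY₂
  · exact Ecl_inter_nonempty_of_le hc hκc hxA (hapr₁ x hxY₁)

theorem grows_or_grows_of_grows_union_left (hκ : ℵ₀ ≤ κ) (hc : ℵ₀ ≤ c) (hX : X₁ ⊆ X₂)
    (hXY₁ : X₁ ⊆ Y₁) (hpure : ∀ ξ, ¬ grows (Ecl κ ξ) X₁ X₂)
    (hapr₁ : ∀ ξ ∈ Y₁, (Ecl κ ξ ∩ X₁).Nonempty) (hapr₂ : ∀ ξ ∈ Y₂, (Ecl κ ξ ∩ X₂).Nonempty)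
    (hcross : c < κ → ∀ x ∈ Ecl c a ∩ (Y₁ \ X₁), ∀ y ∈ Ecl c a ∩ (Y₂ \ X₂), x ∈ Y₂ ∧ y ∈ Y₁)
    (h : grows (Ecl c a) Y₁ (Y₁ ∪ Y₂)) : grows (Ecl c a) X₂ Y₂ ∨ grows (Ecl c a) X₁ X₂ := by
  obtain ⟨⟨z, hzA, hzY₁⟩, hne⟩ := h
  obtain ⟨y, hyA, hyY, hyY₁⟩ := exists_mem_not_mem_of_inter_ne subset_union_left hne
  have hyY₂ : y ∈ Y₂ := hyY.resolve_left hyY₁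
  have hyX₁ : y ∉ X₁ := fun hy => hyY₁ (hXY₁ hy)
  by_cases hyX₂ : y ∈ X₂
  · refine Or.inr ⟨?_, fun heq => hyX₁ (heq.symm.subset ⟨hyA, hyX₂⟩).2⟩
    rcases lt_or_ge c κ with hcκ | hκc
    · exact absurd (mem_of_not_grows (hpure z) (hapr₁ z hzY₁)
        (mem_Ecl_of_mem_Ecl_of_le hκ hcκ.le hzA hyA) hyX₂) hyX₁
    · exact Ecl_inter_nonempty_of_le hc hκc hzA (hapr₁ z hzY₁)
  · refine Or.inl ⟨?_, fun heq => hyX₂ (heq.symm.subset ⟨hyA, hyY₂⟩).2⟩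
    rcases lt_or_ge c κ with hcκ | hκc
    · by_cases hzX₁ : z ∈ X₁
      · exact ⟨z, hzA, hX hzX₁⟩
      · exact absurd (hcross hcκ z ⟨hzA, hzY₁, hzX₁⟩ y ⟨hyA, hyY₂, hyX₂⟩).2 hyY₁
    · exact Ecl_inter_nonempty_of_le hc hκc hyA (hapr₂ y hyY₂)

end Amalgamation

theorem eq_of_mem_cdom_of_agreeOnBlocks {lam mu : Cardinal} {K : Set Cardinal} {κ : Cardinal}
    {s₁ s₂ t₁ t₂ : Cond} (h₁₂ : condLePr lam mu K κ s₁ s₂) (hst₁ : condLeApr lam mu K κ s₁ t₁)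
    (hst₂ : condLeApr lam mu K κ s₂ t₂)
    (hagree : AgreeOnBlocks (EclLt K κ) (cdom t₁ \ cdom s₁) (cdom t₂ \ cdom s₂) t₁ t₂) :
    ∀ ξ ∈ cdom t₁, ξ ∈ cdom t₂ → t₁ ξ = t₂ ξ := by
  intro ξ hξ₁ hξ₂
  by_cases hξX : ξ ∈ cdom s₁
  · obtain ⟨b, hb⟩ := Option.isSome_iff_exists.mp hξX
    rw [hst₁.1.1 ξ b hb, hst₂.1.1 ξ b (h₁₂.1.1 ξ b hb)]
  · have hξX₂ : ξ ∉ cdom s₂ := fun h =>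
      hξX (mem_of_not_grows (h₁₂.2 ξ) (hst₁.2 ξ hξ₁) (mem_Ecl_self κ ξ) h)
    exact (hagree ξ ⟨hξ₁, hξX⟩ ξ ⟨hξ₂, hξX₂⟩ rfl).2.2

theorem compatQ_of_agreeOnBlocks {lam mu : Cardinal} {K : Set Cardinal} {κ : Cardinal}
    (hK : ∀ c ∈ K, ℵ₀ ≤ c) (hκ : ℵ₀ ≤ κ) {s₁ s₂ t₁ t₂ : Cond} (ht₁ : inQ lam mu K t₁)
    (ht₂ : inQ lam mu K t₂) (h₁₂ : condLePr lam mu K κ s₁ s₂)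
    (hst₁ : condLeApr lam mu K κ s₁ t₁) (hst₂ : condLeApr lam mu K κ s₂ t₂)
    (hagree : AgreeOnBlocks (EclLt K κ) (cdom t₁ \ cdom s₁) (cdom t₂ \ cdom s₂) t₁ t₂) :
    compatQ lam mu K t₁ t₂ := by
  have hX := cdom_subset_of_extends h₁₂.1.1
  have hXY₁ := cdom_subset_of_extends hst₁.1.1
  have hXY₂ := cdom_subset_of_extends hst₂.1.1
  have hcommon := eq_of_mem_cdom_of_agreeOnBlocks h₁₂ hst₁ hst₂ hagree
  have hcross : ∀ c ∈ K, c < κ → ∀ a, ∀ x ∈ Ecl c a ∩ (cdom t₁ \ cdom s₁),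
      ∀ y ∈ Ecl c a ∩ (cdom t₂ \ cdom s₂), x ∈ cdom t₂ ∧ y ∈ cdom t₁ := by
    intro c hc hcκ a x hx y hy
    have hxy := hagree x hx.2 y hy.2
      (EclLt_eq_of_mem_Ecl hK ⟨hc, hcκ⟩ (Ecl_eq_of_mem hx.1 ▸ hy.1)).symm
    exact ⟨hxy.1.1, hxy.2.1.1⟩
  have hθ : ∀ c, ℵ₀ ≤ lift.{1} (theta lam K c) := fun c =>
    aleph0_le_lift.mpr (isRegular_theta lam K c).1
  refine ⟨unionC t₁ t₂, inQ_unionC ht₁ ht₂, ⟨fun i b => unionC_extends_left t₂, fun c hc => ?_⟩,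
    ⟨fun i b => unionC_extends_right hcommon, fun c hc => ?_⟩⟩
  · have hsub : growClasses mu c (cdom t₁) (cdom (unionC t₁ t₂)) ⊆
        growClasses mu c (cdom s₂) (cdom t₂) ∪ growClasses mu c (cdom s₁) (cdom s₂) := by
      rintro _ ⟨⟨a, ha, rfl⟩, hg⟩
      rw [cdom_unionC] at hg
      exact (grows_or_grows_of_grows_union_left hκ (hK c hc) hX hXY₁ h₁₂.2 hst₁.2 hst₂.2
        (hcross c hc · a) hg).imp (fun h => ⟨⟨a, ha, rfl⟩, h⟩) (fun h => ⟨⟨a, ha, rfl⟩, h⟩)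
    exact (mk_le_mk_of_subset hsub).trans_lt <| (mk_union_le _ _).trans_lt <|
      add_lt_of_lt (hθ c) (hst₂.1.2 c hc) (h₁₂.1.2 c hc)
  · have hsub : growClasses mu c (cdom t₂) (cdom (unionC t₁ t₂)) ⊆
        growClasses mu c (cdom s₁) (cdom t₁) := by
      rintro _ ⟨⟨a, ha, rfl⟩, hg⟩
      rw [cdom_unionC] at hg
      exact ⟨⟨a, ha, rfl⟩, grows_of_grows_union_right hκ (hK c hc) hX hXY₂ h₁₂.2 hst₁.2
        (hcross c hc · a) hg⟩
    exact (mk_le_mk_of_subset hsub).trans_lt (hst₁.1.2 c hc)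

theorem stmt16_general (lam mu : Cardinal) (K : Set Cardinal) (hctx : GroundCtx lam mu K)
    (κ : Cardinal) (hκ : κ ∈ K)
    (istar : Ordinal) (s t : Ordinal → Cond)
    (htQ : ∀ i < istar, inQ lam mu K (t i))
    (hmono : ∀ i j : Ordinal, i ≤ j → j < istar → condLePr lam mu K κ (s i) (s j))
    (hst : ∀ i < istar, condLeApr lam mu K κ (s i) (t i))
    (hinc : ∀ i j : Ordinal, i < istar → j < istar → i ≠ j →
      ¬ compatQ lam mu K (t i) (t j)) :
    istar < (Order.succ (2 ^< theta lam K κ)).ord := by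
  obtain ⟨-, -, -, -, hKreg, -, -⟩ := hctx
  have hK : ∀ c ∈ K, ℵ₀ ≤ c := fun c hc => (hKreg c hc).1.1
  have hθ := isRegular_theta lam K κ
  by_contra! hbig
  obtain ⟨i, j, hij, hj, hagree⟩ := exists_lt_agreeOnBlocks hθ le_two_powerlt
    (fun ν hν => two_powerlt_power_le hθ hν)
    ((lt_aleph0_of_finite (Option Bool)).le.trans (hθ.1.trans le_two_powerlt))
    (EclLt K κ)
    (fun x => (mk_le_mk_of_subset fun y (hy : EclLt K κ y = _) =>
        hy.subset (Or.inl rfl)).trans <|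
      (mk_EclLt_le lam K κ x).trans (lift_le.mpr le_two_powerlt))
    (fun α => cdom (t α) \ cdom (s α))
    (fun α hα => mk_cdom_diff_lt hκ (htQ α (hα.trans_le hbig)) (hst α (hα.trans_le hbig))) t
  have hjs : j < istar := hj.trans_le hbig
  exact hinc i j (hij.trans hjs) hjs hij.ne <| compatQ_of_agreeOnBlocks hK (hK κ hκ)
    (htQ i (hij.trans hjs)) (htQ j hjs) (hmono i j hij.le hjs) (hst i (hij.trans hjs)) (hst j hjs)
    hagree

/-- antichain bound along pure increasing sequences: if
`(2^{<θ_κ})⁺ ≤ κ`, `(s_i : i < i*)` is `≤pr_κ`-increasing, `s_i ≤apr_κ t_i`, and the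
`t_i` are pairwise incompatible in `Q`, then `i* < (2^{<θ_κ})⁺`. -/
theorem stmt16 (lam mu : Cardinal) (K : Set Cardinal) (hctx : GroundCtx lam mu K)
    (κ : Cardinal) (hκ : κ ∈ K) (hcc : Order.succ (2 ^< theta lam K κ) ≤ κ)
    (istar : Ordinal) (s t : Ordinal → Cond)
    (hsQ : ∀ i < istar, inQ lam mu K (s i)) (htQ : ∀ i < istar, inQ lam mu K (t i))
    (hmono : ∀ i j : Ordinal, i ≤ j → j < istar → condLePr lam mu K κ (s i) (s j))
    (hst : ∀ i < istar, condLeApr lam mu K κ (s i) (t i))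
    (hinc : ∀ i j : Ordinal, i < istar → j < istar → i ≠ j →
      ¬ compatQ lam mu K (t i) (t j)) :
    istar < (Order.succ (2 ^< theta lam K κ)).ord :=
  stmt16_general lam mu K hctx κ hκ istar s t htQ hmono hst hinc
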